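/- For every integer n ≥ 2, the quotient of the sum over x from 0 to n of (1/(n + 1)) · (x(x − 1)/(n(n − 1))) by the sum over x from 0 to n of (1/(n + 1)) · (x/n) equals 2/3. (Interpretation: in the conditional-probability model, the conditional probability that both drawn balls are red given that the first drawn ball is red equals 2/3; this is the answer to Litt's puzzle.) -/

import Mathlib

open Finset

theorem two_mul_sum_range_succ_cast {R : Type*} [CommSemiring R] (n : ℕ) :
    2 * ∑ x ∈ range (n + 1), (x : R) = n * (n + 1) := by
  induction n with
  | zero => simp
  | succ k ih => rw [sum_range_succ, mul_add, ih]; push_cast; ring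

theorem three_mul_sum_range_succ_cast_mul_sub_one {R : Type*} [CommRing R] (n : ℕ) :
    3 * ∑ x ∈ range (n + 1), (x : R) * (x - 1) = (n + 1) * n * (n - 1) := by
  induction n with
  | zero => simp
  | succ k ih => rw [sum_range_succ, mul_add, ih]; push_cast; ring

/-- For every integer `n ≥ 2`, the quotient of
`∑ x in {0,…,n}, (1/(n+1)) * (x(x-1)/(n(n-1)))` by
`∑ x in {0,…,n}, (1/(n+1)) * (x/n)` equals `2/3`. -/
theorem stmt_4 (n : ℕ) (hn : 2 ≤ n) :
    (∑ x ∈ Finset.range (n + 1),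
        (1 / ((n : ℚ) + 1)) * ((x : ℚ) * ((x : ℚ) - 1) / ((n : ℚ) * ((n : ℚ) - 1)))) /
      (∑ x ∈ Finset.range (n + 1), (1 / ((n : ℚ) + 1)) * ((x : ℚ) / (n : ℚ))) = 2 / 3 := by
  have hn₀ : (n : ℚ) ≠ 0 := by positivity
  have hn₁ : (n : ℚ) - 1 ≠ 0 := by
    rw [sub_ne_zero]; exact_mod_cast (by omega : n ≠ 1)
  rw [← mul_sum, ← mul_sum, mul_div_mul_left _ _ (by positivity), ← sum_div, ← sum_div]
  have hsum₁ : ∑ x ∈ range (n + 1), (x : ℚ) = n * (n + 1) / 2 := by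
    linear_combination two_mul_sum_range_succ_cast (R := ℚ) n / 2
  have hsum₂ : ∑ x ∈ range (n + 1), (x : ℚ) * (x - 1) = (n + 1) * n * (n - 1) / 3 := by
    linear_combination three_mul_sum_range_succ_cast_mul_sub_one (R := ℚ) n / 3
  rw [hsum₁, hsum₂]
  field_simp
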